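/- A universal triangular covering map p : G̃ → G is Galois with respect to its deck transformation group Γ = {γ ∈ Aut(G̃) : p ∘ γ = p}: the fibres of p are exactly the orbits of Γ acting on V(G̃). In particular, G̃/Γ ≅ G. -/

import Mathlib

open SimpleGraph

/-- The closed neighbourhood of a vertex. -/
def closedNbhd {V : Type*} (G : SimpleGraph V) (v : V) : Set V := insert v (G.neighborSet v)

/-- A triangular covering map: a graph homomorphism between connected graphs whose
restriction to each closed neighbourhood is an isomorphism onto the closed
neighbourhood of the image vertex. -/
structure IsTriangularCover {V' V : Type*} {G' : SimpleGraph V'} {G : SimpleGraph V}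
    (p : G' →g G) : Prop where
  connDom : G'.Connected
  connCod : G.Connected
  injOn : ∀ v : V', Set.InjOn p (closedNbhd G' v)
  surjOn : ∀ v : V', Set.SurjOn p (closedNbhd G' v) (closedNbhd G (p v))
  reflectAdj : ∀ v x y : V', x ∈ closedNbhd G' v → y ∈ closedNbhd G' v →
    G.Adj (p x) (p y) → G'.Adj x y

/-- Elementary moves on walks (recorded as lists of vertices): triangle
removal/insertion and dead end removal/insertion. -/
inductive ElemMove {V : Type*} (G : SimpleGraph V) : List V → List V → Prop
  | triRemove (l₁ l₂ : List V) (a b c : V) (h₁ : G.Adj a b) (h₂ : G.Adj b c) (h₃ : G.Adj a c) :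
      ElemMove G (l₁ ++ a :: b :: c :: l₂) (l₁ ++ a :: c :: l₂)
  | triInsert (l₁ l₂ : List V) (a b c : V) (h₁ : G.Adj a b) (h₂ : G.Adj b c) (h₃ : G.Adj a c) :
      ElemMove G (l₁ ++ a :: c :: l₂) (l₁ ++ a :: b :: c :: l₂)
  | deadEndRemove (l₁ l₂ : List V) (a b : V) (h : G.Adj a b) :
      ElemMove G (l₁ ++ a :: b :: a :: l₂) (l₁ ++ a :: l₂)
  | deadEndInsert (l₁ l₂ : List V) (a b : V) (h : G.Adj a b) :
      ElemMove G (l₁ ++ a :: l₂) (l₁ ++ a :: b :: a :: l₂)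

/-- Two walks are homotopic if one can be transformed into the other by a finite
sequence of elementary moves. -/
def Homotopic {V : Type*} (G : SimpleGraph V) : List V → List V → Prop :=
  Relation.ReflTransGen (ElemMove G)

/-- A graph is triangularly simply connected if it is connected and every closed walk
is homotopic to a trivial walk. -/
def TriSimplyConnected {V : Type*} (G : SimpleGraph V) : Prop :=
  G.Connected ∧ ∀ (v : V) (l : List V), (v :: l).Chain' G.Adj →
    (v :: l).getLast (List.cons_ne_nil v l) = v → Homotopic G (v :: l) [v]

/-- Two vertices are related by a deck transformation of `p`. -/
def DeckRel {V' V : Type*} {G' : SimpleGraph V'} {G : SimpleGraph V}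
    (p : G' →g G) (x y : V') : Prop :=
  ∃ γ : G' ≃g G', (∀ z : V', p (γ z) = p z) ∧ γ x = y

/-- The quotient graph of `G'` by the deck transformation group: vertices are the
orbits, two distinct orbits being adjacent iff they contain adjacent representatives. -/
def quotGraph {V' V : Type*} {G' : SimpleGraph V'} {G : SimpleGraph V}
    (p : G' →g G) : SimpleGraph (Quot (DeckRel p)) where
  Adj c d := c ≠ d ∧ ∃ x y : V', Quot.mk _ x = c ∧ Quot.mk _ y = d ∧ G'.Adj x y
  symm := by
    constructor
    rintro c d ⟨hne, x, y, hx, hy, hadj⟩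
    exact ⟨hne.symm, y, x, hy, hx, hadj.symm⟩
  loopless := by constructor; rintro c ⟨hne, -⟩; exact hne rfl

/-!
A triangular cover lifts edges uniquely from a given vertex, and since it also reflects triangles,
every elementary move of a walk in `G` can be performed on a lift of that walk without moving its
endpoints. Given `p x = p y`, send `z` to the endpoint `w` of the lift at `y` of the image of a
walk from `x` to `z`. Two such walks form a closed walk at `x`, which is null-homotopic because
`G'` is triangularly simply connected; so the image of the closed walk is homotopic to a trivial
walk, its lift at `y` is closed, and `w` does not depend on the walk. The resulting map is a deck
transformation taking `x` to `y`, so the fibres are the orbits and `p` descends to an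
isomorphism from the quotient graph onto `G`.
-/

theorem List.IsChain.splice {α : Type*} {R : α → α → Prop} {A X Y B : List α}
    (h : (A ++ X ++ B).IsChain R) (hY : Y.IsChain R) (hh : Y.head? = X.head?)
    (hl : Y.getLast? = X.getLast?) : (A ++ Y ++ B).IsChain R := by
  simp only [List.append_assoc, List.isChain_append, List.head?_append] at h ⊢
  rw [hh, hl]
  exact ⟨h.1, ⟨hY, h.2.1.2.1, h.2.1.2.2⟩, h.2.2⟩

theorem SimpleGraph.Walk.head?_support {V : Type*} {G : SimpleGraph V} {u v : V}
    (s : G.Walk u v) : s.support.head? = some u := by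
  rw [← s.cons_tail_support, List.head?_cons]

theorem SimpleGraph.Walk.getLast?_support {V : Type*} {G : SimpleGraph V} {u v : V}
    (s : G.Walk u v) : s.support.getLast? = some v := by
  rw [List.getLast?_eq_some_getLast s.support_ne_nil, s.getLast_support]

theorem SimpleGraph.Reachable.of_forall_adj {V : Type*} {G : SimpleGraph V} {P : V → Prop}
    {u v : V} (h : G.Reachable u v) (hP : ∀ ⦃a b⦄, G.Adj a b → P a → P b) (hu : P u) : P v := by
  obtain ⟨W⟩ := h
  induction W with
  | nil => exact hu
  | cons hadj _ ih => exact ih (hP hadj hu)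

section

variable {V' V : Type*} {G' : SimpleGraph V'} {G : SimpleGraph V} {p : G' →g G}

namespace IsTriangularCover

theorem exists_adj_map_eq (hp : IsTriangularCover p) {x : V'} {v : V} (h : G.Adj (p x) v) :
    ∃ y, G'.Adj x y ∧ p y = v := by
  obtain ⟨y, hy, rfl⟩ := hp.surjOn x (Set.mem_insert_of_mem _ h)
  rcases hy with rfl | hy
  · exact absurd h (G.loopless.irrefl _)
  · exact ⟨y, hy, rfl⟩

theorem eq_of_adj_of_map_eq (hp : IsTriangularCover p) {x y z : V'} (hy : G'.Adj x y)
    (hz : G'.Adj x z) (h : p y = p z) : y = z :=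
  hp.injOn x (Set.mem_insert_of_mem _ hy) (Set.mem_insert_of_mem _ hz) h

theorem adj_of_map_adj (hp : IsTriangularCover p) {x y z : V'} (hy : G'.Adj x y)
    (hz : G'.Adj x z) (h : G.Adj (p y) (p z)) : G'.Adj y z :=
  hp.reflectAdj x y z (Set.mem_insert_of_mem _ hy) (Set.mem_insert_of_mem _ hz) h

theorem surjective (hp : IsTriangularCover p) : Function.Surjective p := by
  obtain ⟨x₀⟩ := hp.connDom.nonempty
  refine fun v ↦ (hp.connCod.preconnected (p x₀) v).of_forall_adj (P := (· ∈ Set.range p)) ?_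
    ⟨x₀, rfl⟩
  rintro - b hadj ⟨x, rfl⟩
  obtain ⟨y, -, rfl⟩ := hp.exists_adj_map_eq hadj
  exact ⟨y, rfl⟩

end IsTriangularCover

variable (p) in
def IsLift (L : List V') (l : List V) : Prop :=
  L.map p = l ∧ L.IsChain G'.Adj

theorem IsLift.exists_splice {l₁ X Y l₂ : List V} {L : List V'} (hL : IsLift p L (l₁ ++ X ++ l₂))
    (hXY : ∀ X', IsLift p X' X →
      ∃ Y', IsLift p Y' Y ∧ Y'.head? = X'.head? ∧ Y'.getLast? = X'.getLast?) :
    ∃ M, IsLift p M (l₁ ++ Y ++ l₂) ∧ M.head? = L.head? ∧ M.getLast? = L.getLast? := by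
  obtain ⟨hmap, hchain⟩ := hL
  obtain ⟨AX, B, rfl, hAX, hB⟩ := List.map_eq_append_iff.mp hmap
  obtain ⟨A, X', rfl, hA, hX⟩ := List.map_eq_append_iff.mp hAX
  obtain ⟨Y', ⟨hY, hY'⟩, hh, hl⟩ := hXY X' ⟨hX, hchain.infix (List.infix_append _ _ _)⟩
  refine ⟨A ++ Y' ++ B, ⟨by simp [hA, hY, hB], hchain.splice hY' hh hl⟩, ?_, ?_⟩
  · simp only [List.append_assoc, List.head?_append, hh]
  · simp only [List.getLast?_append, hl]

theorem ElemMove.exists_isLift (hp : IsTriangularCover p) {l m : List V} (h : ElemMove G l m)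
    {L : List V'} (hL : IsLift p L l) :
    ∃ M, IsLift p M m ∧ M.head? = L.head? ∧ M.getLast? = L.getLast? := by
  cases h with
  | triRemove l₁ l₂ a b c hab hbc hac =>
    have := IsLift.exists_splice (X := [a, b, c]) (Y := [a, c]) (by simpa using hL) ?_
    · simpa using this
    rintro _ ⟨hX, hchain⟩
    obtain ⟨x, y, z, rfl, rfl, rfl, rfl⟩ := by simpa [List.map_eq_cons_iff] using hX
    simp only [List.isChain_cons_cons, List.isChain_singleton, and_true] at hchain
    exact ⟨[x, z], ⟨rfl, by simpa using hp.adj_of_map_adj hchain.1.symm hchain.2 hac⟩, rfl, rfl⟩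
  | triInsert l₁ l₂ a b c hab hbc hac =>
    have := IsLift.exists_splice (X := [a, c]) (Y := [a, b, c]) (by simpa using hL) ?_
    · simpa using this
    rintro _ ⟨hX, hchain⟩
    obtain ⟨x, z, rfl, rfl, rfl⟩ := by simpa [List.map_eq_cons_iff] using hX
    simp only [List.isChain_pair] at hchain
    obtain ⟨y, hxy, rfl⟩ := hp.exists_adj_map_eq hab
    exact ⟨[x, y, z], ⟨rfl, by simpa using ⟨hxy, hp.adj_of_map_adj hxy hchain hbc⟩⟩, rfl, rfl⟩
  | deadEndRemove l₁ l₂ a b hab =>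
    have := IsLift.exists_splice (X := [a, b, a]) (Y := [a]) (by simpa using hL) ?_
    · simpa using this
    rintro _ ⟨hX, hchain⟩
    obtain ⟨x, y, x', rfl, rfl, rfl, hx'⟩ := by simpa [List.map_eq_cons_iff] using hX
    simp only [List.isChain_cons_cons, List.isChain_singleton, and_true] at hchain
    obtain rfl := hp.eq_of_adj_of_map_eq hchain.1.symm hchain.2 hx'.symm
    exact ⟨[x], ⟨rfl, List.isChain_singleton _⟩, rfl, rfl⟩
  | deadEndInsert l₁ l₂ a b hab =>
    have := IsLift.exists_splice (X := [a]) (Y := [a, b, a]) (by simpa using hL) ?_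
    · simpa using this
    rintro _ ⟨hX, -⟩
    obtain ⟨x, rfl, rfl⟩ := by simpa using hX
    obtain ⟨y, hxy, rfl⟩ := hp.exists_adj_map_eq hab
    exact ⟨[x, y, x], ⟨rfl, by simpa using ⟨hxy, hxy.symm⟩⟩, rfl, rfl⟩

theorem Homotopic.exists_isLift (hp : IsTriangularCover p) {l m : List V} (h : Homotopic G l m)
    {L : List V'} (hL : IsLift p L l) :
    ∃ M, IsLift p M m ∧ M.head? = L.head? ∧ M.getLast? = L.getLast? := by
  induction h with
  | refl => exact ⟨L, hL, rfl, rfl⟩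
  | tail _ step ih =>
    obtain ⟨M, hM, hMh, hMl⟩ := ih
    obtain ⟨N, hN, hNh, hNl⟩ := step.exists_isLift hp hM
    exact ⟨N, hN, hNh.trans hMh, hNl.trans hMl⟩

theorem ElemMove.map {l m : List V'} (h : ElemMove G' l m) : ElemMove G (l.map p) (m.map p) := by
  cases h with
  | triRemove l₁ l₂ a b c hab hbc hac =>
    simpa using ElemMove.triRemove (l₁.map p) (l₂.map p) _ _ _
      (p.map_adj hab) (p.map_adj hbc) (p.map_adj hac)
  | triInsert l₁ l₂ a b c hab hbc hac =>
    simpa using ElemMove.triInsert (l₁.map p) (l₂.map p) _ _ _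
      (p.map_adj hab) (p.map_adj hbc) (p.map_adj hac)
  | deadEndRemove l₁ l₂ a b hab =>
    simpa using ElemMove.deadEndRemove (l₁.map p) (l₂.map p) _ _ (p.map_adj hab)
  | deadEndInsert l₁ l₂ a b hab =>
    simpa using ElemMove.deadEndInsert (l₁.map p) (l₂.map p) _ _ (p.map_adj hab)

theorem Homotopic.map {l m : List V'} (h : Homotopic G' l m) :
    Homotopic G (l.map p) (m.map p) :=
  Relation.ReflTransGen.lift (List.map p) (fun _ _ ↦ ElemMove.map) _ _ h

theorem TriSimplyConnected.homotopic_support (hsc : TriSimplyConnected G') {x : V'}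
    (s : G'.Walk x x) : Homotopic G' s.support [x] := by
  rw [← s.cons_tail_support]
  exact hsc.2 x _ (by rw [s.cons_tail_support]; exact s.isChain_adj_support)
    (by simpa only [s.cons_tail_support] using s.getLast_support)

variable (p) in
def ParallelWalks (x z y w : V') : Prop :=
  ∃ (s : G'.Walk x z) (t : G'.Walk y w), s.support.map p = t.support.map p

namespace ParallelWalks

variable {x y z w z' w' : V'}

theorem nil (h : p x = p y) : ParallelWalks p x x y y :=
  ⟨.nil, .nil, by simp [h]⟩

theorem of_adj (hz : G'.Adj z z') (hw : G'.Adj w w') (h : p z = p w) (h' : p z' = p w') :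
    ParallelWalks p z z' w w' :=
  ⟨.cons hz .nil, .cons hw .nil, by simp [h, h']⟩

theorem symm (h : ParallelWalks p x z y w) : ParallelWalks p y w x z :=
  let ⟨s, t, hst⟩ := h
  ⟨t, s, hst.symm⟩

theorem reverse (h : ParallelWalks p x z y w) : ParallelWalks p z x w y :=
  let ⟨s, t, hst⟩ := h
  ⟨s.reverse, t.reverse, by simp only [Walk.support_reverse, List.map_reverse, hst]⟩

theorem trans (h : ParallelWalks p x z y w) (h' : ParallelWalks p z z' w w') :
    ParallelWalks p x z' y w' :=
  let ⟨s, t, hst⟩ := h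
  let ⟨s', t', hst'⟩ := h'
  ⟨s.append s', t.append t', by
    simp only [Walk.support_append, List.map_append, List.map_tail, hst, hst']⟩

theorem map_eq (h : ParallelWalks p x z y w) : p z = p w := by
  obtain ⟨s, t, hst⟩ := h
  simpa [List.getLast?_map, Walk.getLast?_support] using congrArg List.getLast? hst

theorem exists_adj (hp : IsTriangularCover p) (h : ParallelWalks p x z y w) (hz : G'.Adj z z') :
    ∃ w', G'.Adj w w' ∧ ParallelWalks p x z' y w' := by
  obtain ⟨w', hww', hw'⟩ := hp.exists_adj_map_eq (h.map_eq ▸ p.map_adj hz)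
  exact ⟨w', hww', h.trans (of_adj hz hww' h.map_eq hw'.symm)⟩

theorem eq_of_closed (hp : IsTriangularCover p) (hsc : TriSimplyConnected G')
    (h : ParallelWalks p x x y w) : y = w := by
  obtain ⟨s, t, hst⟩ := h
  obtain ⟨M, hM, hMh, hMl⟩ := (hsc.homotopic_support s).map.exists_isLift hp
    ⟨hst.symm, t.isChain_adj_support⟩
  obtain ⟨m, rfl, -⟩ := List.map_eq_singleton_iff.mp hM.1
  rw [t.head?_support] at hMh
  rw [t.getLast?_support] at hMl
  exact Option.some.inj (hMh.symm.trans hMl)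

theorem unique (hp : IsTriangularCover p) (hsc : TriSimplyConnected G')
    (h₁ : ParallelWalks p x z y w) (h₂ : ParallelWalks p x z y w') : w = w' :=
  (h₁.reverse.trans h₂).eq_of_closed hp hsc

end ParallelWalks

theorem exists_parallelWalks (hp : IsTriangularCover p) {x y : V'} (hxy : p x = p y) (z : V') :
    ∃ w, ParallelWalks p x z y w := by
  refine (hp.connDom.preconnected x z).of_forall_adj (P := fun z ↦ ∃ w, ParallelWalks p x z y w)
    ?_ ⟨y, .nil hxy⟩
  rintro a b hab ⟨w, h⟩
  obtain ⟨w', -, h'⟩ := h.exists_adj hp hab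
  exact ⟨w', h'⟩

theorem exists_hom_parallelWalks (hp : IsTriangularCover p) (hsc : TriSimplyConnected G')
    {x y : V'} (hxy : p x = p y) : ∃ f : G' →g G', ∀ z, ParallelWalks p x z y (f z) := by
  choose f hf using exists_parallelWalks hp hxy
  refine ⟨⟨f, fun {z z'} hz ↦ ?_⟩, hf⟩
  obtain ⟨w', hw', h'⟩ := (hf z).exists_adj hp hz
  rwa [(hf z').unique hp hsc h']

theorem DeckRel.map_eq {x y : V'} (h : DeckRel p x y) : p x = p y := by
  obtain ⟨γ, hγ, rfl⟩ := h
  exact (hγ x).symm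

theorem deckRel_of_map_eq (hp : IsTriangularCover p) (hsc : TriSimplyConnected G') {x y : V'}
    (hxy : p x = p y) : DeckRel p x y := by
  obtain ⟨f, hf⟩ := exists_hom_parallelWalks hp hsc hxy
  obtain ⟨g, hg⟩ := exists_hom_parallelWalks hp hsc hxy.symm
  have hgf : ∀ z, g (f z) = z := fun z ↦ (hg (f z)).unique hp hsc (hf z).symm
  have hfg : ∀ z, f (g z) = z := fun z ↦ (hf (g z)).unique hp hsc (hg z).symm
  refine ⟨⟨⟨f, g, hgf, hfg⟩, fun {a b} ↦ ⟨fun h ↦ ?_, f.map_adj⟩⟩,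
    fun z ↦ ((hf z).map_eq).symm, (hf x).unique hp hsc (.nil hxy)⟩
  simpa only [hgf] using g.map_adj (show G'.Adj (f a) (f b) from h)

theorem nonempty_quotGraph_iso (hp : IsTriangularCover p)
    (hfib : ∀ x y, p x = p y → DeckRel p x y) : Nonempty (quotGraph p ≃g G) := by
  let f : Quot (DeckRel p) → V := Quot.lift p fun _ _ ↦ DeckRel.map_eq
  have hinj : f.Injective :=
    Quot.ind fun x ↦ Quot.ind fun y h ↦ Quot.sound (hfib x y h)
  have hsurj : f.Surjective := fun v ↦
    let ⟨x, hx⟩ := hp.surjective v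
    ⟨Quot.mk _ x, hx⟩
  refine ⟨⟨Equiv.ofBijective f ⟨hinj, hsurj⟩, fun {c d} ↦ ?_⟩⟩
  induction c using Quot.ind with | mk x => ?_
  induction d using Quot.ind with | mk y => ?_
  refine ⟨fun h ↦ ?_, ?_⟩
  · obtain ⟨y', hxy', hy'⟩ := hp.exists_adj_map_eq h
    exact ⟨fun hxy ↦ h.ne (congrArg f hxy), x, y', rfl, hinj hy', hxy'⟩
  · rintro ⟨-, x', y', hx, hy, hxy'⟩
    rw [← hx, ← hy]
    exact p.map_adj hxy'

end

/-- A universal triangular covering map is Galois with its deck transformation group: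
the fibres are exactly the orbits, and the quotient graph is isomorphic to `G`. -/
theorem universal_cover_galois {V' V : Type*} {G' : SimpleGraph V'} {G : SimpleGraph V}
    (p : G' →g G) (hp : IsTriangularCover p) (hsc : TriSimplyConnected G') :
    (∀ x y : V', p x = p y ↔ DeckRel p x y) ∧ Nonempty (quotGraph p ≃g G) :=
  ⟨fun _ _ ↦ ⟨deckRel_of_map_eq hp hsc, DeckRel.map_eq⟩,
    nonempty_quotGraph_iso hp fun _ _ ↦ deckRel_of_map_eq hp hsc⟩
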